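/- arXiv:2509.13130 — 5 statements merged into one kernel-verified Lean document; each statement's English description precedes it below -/
import Mathlib

section
/- Let ℰ be a valid fuzzy confidence set (E_P[ℰ^{Z^n}(Z_{n+1})] ≤ 1 for all P ∈ 𝒫), with sublevel sets C_α^{Z^n} = {z : ℰ^{Z^n}(z) < 1/α}. Then for any data-dependent (measurable, strictly positive) significance level α̃ = α̃(Z^{n+1}), it holds that E_P[1{Z_{n+1} ∉ C_{α̃}^{Z^n}} / α̃] ≤ 1 for every P ∈ 𝒫. -/
open MeasureTheory
open scoped ENNReal

theorem ENNReal.ite_not_lt_one_div_le (e α : ℝ≥0∞) :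
    (if ¬e < 1 / α then α⁻¹ else 0) ≤ e := by
  split_ifs with h
  · exact zero_le
  · simpa only [not_lt, one_div] using h

theorem stmt_3_general {Z : Type*} [MeasurableSpace Z] (n : ℕ)
    (model : Set (Measure ((Fin n → Z) × Z)))
    (E : (Fin n → Z) × Z → ℝ≥0∞)
    (hvalid : ∀ P ∈ model, ∫⁻ ω, E ω ∂P ≤ 1)
    (alphaTilde : (Fin n → Z) × Z → ℝ≥0∞) :
    ∀ P ∈ model,
      ∫⁻ ω, (if ω.2 ∉ {z : Z | E (ω.1, z) < 1 / alphaTilde ω} then (alphaTilde ω)⁻¹ else 0)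
        ∂P ≤ 1 := by
  intro P hPm
  calc ∫⁻ ω, (if ω.2 ∉ {z : Z | E (ω.1, z) < 1 / alphaTilde ω} then (alphaTilde ω)⁻¹ else 0) ∂P
      ≤ ∫⁻ ω, E ω ∂P :=
        lintegral_mono fun ω => ENNReal.ite_not_lt_one_div_le (E ω) (alphaTilde ω)
    _ ≤ 1 := hvalid P hPm

/-- Post-hoc validity: for a valid fuzzy confidence set `ℰ` with sublevel sets
`C_α = {z : ℰ^{z^n}(z) < 1/α}`, and any data-dependent (measurable, strictly
positive) significance level `α̃`, the expectation of
`1{Z_{n+1} ∉ C_{α̃}} / α̃` is at most 1 under every `P` in the model. -/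
theorem stmt_3 {Z : Type*} [MeasurableSpace Z] (n : ℕ)
    (model : Set (Measure ((Fin n → Z) × Z)))
    (hP : ∀ P ∈ model, IsProbabilityMeasure P)
    (E : (Fin n → Z) × Z → ℝ≥0∞) (hE : Measurable E)
    (hvalid : ∀ P ∈ model, ∫⁻ ω, E ω ∂P ≤ 1)
    (alphaTilde : (Fin n → Z) × Z → ℝ≥0∞) (halpha : Measurable alphaTilde)
    (hpos : ∀ ω, 0 < alphaTilde ω) (hfin : ∀ ω, alphaTilde ω ≠ ∞) :
    ∀ P ∈ model,
      ∫⁻ ω, (if ω.2 ∉ {z : Z | E (ω.1, z) < 1 / alphaTilde ω} then (alphaTilde ω)⁻¹ else 0)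
        ∂P ≤ 1 :=
  stmt_3_general n model E hvalid alphaTilde
end

section
/- If Z^{n+1} = (Z_1,…,Z_{n+1}) is exchangeable under Q restricted to the first n coordinates (i.e., Z^n is exchangeable), then conditionally on the Π(n+1)-orbit O of Z^{n+1} and on Z_{n+1}, the vector Z^n is distributed as a uniformly random ordering (sampling without replacement) of the multiset of the orbit representative [Z^{n+1}] with the element Z_{n+1} removed. -/
open MeasureTheory
open scoped ENNReal

lemma exists_comp_perm_aux {α : Type*} : ∀ {n : ℕ} {f g : Fin n → α},
    (List.ofFn f).Perm (List.ofFn g) → ∃ π : Equiv.Perm (Fin n), f ∘ π = g := by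
  intro n
  induction n with
  | zero => exact fun {f g} _ => ⟨1, funext fun i => i.elim0⟩
  | succ n ih =>
    intro f g h
    have hg0 : g 0 ∈ List.ofFn f := h.symm.subset (by
      rw [List.mem_ofFn]; exact ⟨0, rfl⟩)
    rw [List.mem_ofFn] at hg0
    obtain ⟨i, hi⟩ := hg0
    set σ := Equiv.swap (0 : Fin (n+1)) i with hσ
    have h0 : (f ∘ σ) 0 = g 0 := by simp [hσ, hi]
    have h1 : (List.ofFn (f ∘ σ)).Perm (List.ofFn g) := (σ.ofFn_comp_perm f).trans h
    rw [List.ofFn_succ, List.ofFn_succ, h0] at h1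
    have h2 := (List.perm_cons _).mp h1
    obtain ⟨τ, hτ⟩ := ih h2
    refine ⟨σ * Equiv.Perm.decomposeFin.symm (0, τ), funext fun x => ?_⟩
    refine Fin.cases ?_ (fun j => ?_) x
    · simpa using h0
    · have := congrFun hτ j
      simpa using this

/-- Discrete formulation: if the first `n` coordinates `Z^n` are exchangeable
under `Q` (the joint law of `(Z^n, Z_{n+1})` is invariant under permutations of
the first `n` coordinates), then conditionally on the full orbit (i.e. the
multiset of all `n+1` values) and on `Z_{n+1}`, the vector `Z^n` is a uniformly
random ordering (sampling without replacement) of the remaining values: `Q`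
assigns equal mass to any two points with the same last coordinate and the same
multiset of values. -/
theorem stmt_10 {Z : Type*} [MeasurableSpace Z] [MeasurableSingletonClass Z]
    [Countable Z] (n : ℕ)
    (Q : Measure ((Fin n → Z) × Z)) [IsProbabilityMeasure Q]
    (hexch : ∀ π : Equiv.Perm (Fin n),
      Measure.map (fun p : (Fin n → Z) × Z => (p.1 ∘ π, p.2)) Q = Q) :
    ∀ p p' : (Fin n → Z) × Z, p.2 = p'.2 →
      Multiset.map p.1 Finset.univ.val + {p.2} =
        Multiset.map p'.1 Finset.univ.val + {p'.2} →
      Q {p} = Q {p'} := by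
  intro p p' h2 hms
  have hms' : Multiset.map p.1 Finset.univ.val = Multiset.map p'.1 Finset.univ.val := by
    rw [h2] at hms
    exact add_right_cancel hms
  -- convert multiset equality to List.Perm of ofFn
  have huniv : (Finset.univ : Finset (Fin n)).val = (List.finRange n : Multiset (Fin n)) := rfl
  have hperm : (List.ofFn p.1).Perm (List.ofFn p'.1) := by
    rw [← Multiset.coe_eq_coe, List.ofFn_eq_map, List.ofFn_eq_map,
      ← Multiset.map_coe, ← Multiset.map_coe, ← huniv]
    exact hms'
  obtain ⟨π, hπ⟩ := exists_comp_perm_aux hperm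
  have hmeas : Measurable (fun q : (Fin n → Z) × Z => (q.1 ∘ π, q.2)) :=
    ((measurable_pi_lambda _ fun i => (measurable_pi_apply (π i)).comp measurable_fst)).prodMk
      measurable_snd
  have key := hexch π
  have hp' : p' = (p.1 ∘ π, p.2) := by
    rw [hπ]; exact Prod.ext rfl h2.symm
  symm
  calc Q {p'} = (Measure.map (fun q : (Fin n → Z) × Z => (q.1 ∘ π, q.2)) Q) {p'} := by
        rw [key]
    _ = Q ((fun q : (Fin n → Z) × Z => (q.1 ∘ π, q.2)) ⁻¹' {p'}) := by
        rw [Measure.map_apply hmeas (measurableSet_singleton _)]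
    _ = Q {p} := by
        congr 1
        ext q
        simp only [Set.mem_preimage, Set.mem_singleton_iff, hp', Prod.mk.injEq]
        constructor
        · rintro ⟨h1, h2⟩
          have : q.1 = p.1 := funext fun i => by
            have := congrFun h1 (π.symm i); simpa using this
          exact Prod.ext this h2
        · rintro rfl; exact ⟨rfl, rfl⟩
end

section
/- Let Q = Q_1 × ⋯ × Q_1 × Q_{n+1} be a product measure on 𝒵^{n+1} (first n factors equal to Q_1), with Q_{n+1} and Q_1 mutually absolutely continuous. Let Q̄ = (1/(n+1)) ∑_{i=1}^{n+1} Q^{(i)}, where Q^{(i)} places Q_{n+1} in the i-th coordinate and Q_1 elsewhere. Then dQ/dQ̄ (z^{n+1}) = r(z_{n+1}) / ((1/(n+1)) ∑_{i=1}^{n+1} r(z_i)), where r = dQ_{n+1}/dQ_1. -/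
/-!
Each `Q^{(i)}` has density `z ↦ r (z i)` with respect to `Q_1^{⊗(n+1)}`, so `Q̄` has density
`(n+1)⁻¹ ∑ᵢ r (zᵢ)`, and the derivative of one measure with a density with respect to another is
the quotient of the densities. Since `Q_1 ≪ Q_{n+1}`, `r > 0` almost everywhere, so the denominator
vanishes only on a null set.
-/

open MeasureTheory
open scoped ENNReal

namespace MeasureTheory

theorem withDensity_finsetSum {α ι : Type*} [MeasurableSpace α] (μ : Measure α) (s : Finset ι)
    {f : ι → α → ℝ≥0∞} (hf : ∀ i ∈ s, Measurable (f i)) :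
    μ.withDensity (∑ i ∈ s, f i) = ∑ i ∈ s, μ.withDensity (f i) := by
  classical
  induction s using Finset.induction_on with
  | empty => simp
  | insert a s ha ih =>
    rw [Finset.sum_insert ha, Finset.sum_insert ha, withDensity_add_left (hf a (by simp)),
      ih fun i hi => hf i (Finset.mem_insert_of_mem hi)]

namespace Measure

theorem pi_update_withDensity {ι : Type*} [Fintype ι] [DecidableEq ι] {α : ι → Type*}
    [∀ i, MeasurableSpace (α i)] (μ : ∀ i, Measure (α i)) [∀ i, SigmaFinite (μ i)] (i : ι)
    {f : α i → ℝ≥0∞} (hf : Measurable f) [SigmaFinite ((μ i).withDensity f)] :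
    Measure.pi (Function.update μ i ((μ i).withDensity f))
      = (Measure.pi μ).withDensity fun x => f (x i) := by
  have : ∀ j, SigmaFinite (Function.update μ i ((μ i).withDensity f) j) := fun j => by
    rcases eq_or_ne j i with rfl | hj
    · rwa [Function.update_self]
    · rw [Function.update_of_ne hj]; infer_instance
  refine pi_eq (μ := Function.update μ i ((μ i).withDensity f)) fun s hs => ?_
  rw [withDensity_apply _ (MeasurableSet.univ_pi hs), restrict_pi_pi,
    ← lintegral_map hf (measurable_pi_apply i), pi_map_eval, lintegral_smul_measure,
    ← Finset.mul_prod_erase _ _ (Finset.mem_univ i), Function.update_self,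
    withDensity_apply _ (hs i), smul_eq_mul, mul_comm]
  refine congrArg _ (Finset.prod_congr rfl fun j hj => ?_)
  rw [Function.update_of_ne (Finset.ne_of_mem_erase hj), restrict_apply_univ]

theorem pi_ite_eq_withDensity {ι α : Type*} [Fintype ι] [DecidableEq ι] [MeasurableSpace α]
    (μ ν : Measure α) [SigmaFinite μ] [SigmaFinite ν] (hνμ : ν ≪ μ) (i : ι) :
    Measure.pi (fun j => if j = i then ν else μ)
      = (Measure.pi fun _ => μ).withDensity fun x => ν.rnDeriv μ (x i) := by
  rw [← pi_update_withDensity _ i (measurable_rnDeriv ν μ), withDensity_rnDeriv_eq _ _ hνμ]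
  congr 1
  ext1 j
  rw [Function.update_apply]

theorem rnDeriv_withDensity_withDensity {α : Type*} [MeasurableSpace α] {μ : Measure α}
    [SigmaFinite μ] {f g : α → ℝ≥0∞} (hf : AEMeasurable f μ) (hg : AEMeasurable g μ)
    (hg_ne_zero : ∀ᵐ x ∂μ, g x ≠ 0) (hg_ne_top : ∀ᵐ x ∂μ, g x ≠ ∞) :
    (μ.withDensity f).rnDeriv (μ.withDensity g) =ᵐ[μ] fun x => f x / g x := by
  filter_upwards [rnDeriv_withDensity_right_of_absolutelyContinuous
      (withDensity_absolutelyContinuous μ f) hg hg_ne_zero hg_ne_top,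
    rnDeriv_withDensity₀ μ hf] with x hx hfx
  rw [hx, hfx, ENNReal.div_eq_inv_mul]

end Measure

end MeasureTheory

open MeasureTheory.Measure

/-- Let `Q^{(i)}` be the product measure on `Z^{n+1}` with `Q_{n+1}` (here `Qb`)
in coordinate `i` and `Q_1` (here `Qa`) elsewhere, `Q = Q^{(n+1)}`, and
`Q̄ = (1/(n+1)) ∑ᵢ Q^{(i)}`. If `Qa` and `Qb` are mutually absolutely continuous
with `r = dQb/dQa`, then `dQ/dQ̄(z) = r(z_{n+1}) / ((1/(n+1)) ∑ᵢ r(zᵢ))`,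
`Q̄`-almost everywhere. -/
theorem stmt_11 {Z : Type*} [MeasurableSpace Z] (n : ℕ)
    (Qa Qb : Measure Z) [IsProbabilityMeasure Qa] [IsProbabilityMeasure Qb]
    (hab : Qb ≪ Qa) (hba : Qa ≪ Qb) :
    (Measure.pi fun j : Fin (n + 1) => if j = Fin.last n then Qb else Qa).rnDeriv
        ((↑(n + 1) : ℝ≥0∞)⁻¹ •
          ∑ i : Fin (n + 1),
            Measure.pi fun j : Fin (n + 1) => if j = i then Qb else Qa)
      =ᵐ[(↑(n + 1) : ℝ≥0∞)⁻¹ •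
          ∑ i : Fin (n + 1),
            Measure.pi fun j : Fin (n + 1) => if j = i then Qb else Qa]
        fun z : Fin (n + 1) → Z =>
          Qb.rnDeriv Qa (z (Fin.last n)) /
            ((↑(n + 1) : ℝ≥0∞)⁻¹ * ∑ i : Fin (n + 1), Qb.rnDeriv Qa (z i)) := by
  set P := Measure.pi fun _ : Fin (n + 1) => Qa
  set r := Qb.rnDeriv Qa
  have hr_eval (i : Fin (n + 1)) : Measurable fun z : Fin (n + 1) → Z => r (z i) :=
    (measurable_rnDeriv Qb Qa).comp (measurable_pi_apply i)
  have hmix : (↑(n + 1) : ℝ≥0∞)⁻¹ • ∑ i : Fin (n + 1), Measure.pi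
        (fun j : Fin (n + 1) => if j = i then Qb else Qa)
      = P.withDensity fun z => (↑(n + 1) : ℝ≥0∞)⁻¹ * ∑ i, r (z i) := by
    simp_rw [pi_ite_eq_withDensity Qa Qb hab]
    rw [← withDensity_finsetSum P _ fun i _ => hr_eval i, ← withDensity_smul' _ _ (by simp)]
    simp only [Finset.sum_fn, Pi.smul_def, smul_eq_mul]
  have hsum_ne_zero : ∀ᵐ z ∂P, ∑ i, r (z i) ≠ 0 := by
    filter_upwards [tendsto_eval_ae_ae.eventually (rnDeriv_pos' hba)] with z hz
    exact fun h => hz.ne' (Finset.sum_eq_zero_iff.1 h 0 (Finset.mem_univ _))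
  have hsum_ne_top : ∀ᵐ z ∂P, ∑ i, r (z i) ≠ ∞ := by
    filter_upwards [ae_all_iff.2 fun i : Fin (n + 1) =>
      tendsto_eval_ae_ae.eventually (rnDeriv_lt_top Qb Qa)] with z hz
    exact ENNReal.sum_ne_top.2 fun i _ => (hz i).ne
  rw [hmix, pi_ite_eq_withDensity Qa Qb hab]
  refine (withDensity_absolutelyContinuous _ _).ae_le
    (rnDeriv_withDensity_withDensity (hr_eval _).aemeasurable
      ((Finset.measurable_sum _ fun i _ => hr_eval i).const_mul _).aemeasurable ?_ ?_)
  · filter_upwards [hsum_ne_zero] with z hz using mul_ne_zero (by simp) hz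
  · filter_upwards [hsum_ne_top] with z hz using ENNReal.mul_ne_top (by simp) hz
end

section
/- Let T : 𝒵^{n+1} → [0,∞) be measurable with T not a.s. zero under an exchangeable P. Then ε(z^{n+1}) = T(z^{n+1}) / ((1/(n+1)!) ∑_{π ∈ Π(n+1)} T(π z^{n+1})) (defined as 1 when the denominator is 0) satisfies E_P[ε(Z^{n+1})] ≤ 1 for every exchangeable probability measure P on 𝒵^{n+1}; i.e., ε is a valid e-value for the exchangeable model. -/
/-!
Write `S(x) = ∑_{g ∈ G} f(g • x)` for the orbit sum of `f` under a finite group `G`; it is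
`G`-invariant. If `μ` is `G`-invariant, then so is the integral of `f(g • x) / S(x)` in `g`, and
summing over `g` gives `|G| ∫ f / S dμ = μ {S ≠ 0}`. The e-value equals `|G| f / S` off
`{S = 0}` and `1` on it, so its integral is `μ {S ≠ 0} + μ {S = 0} = μ univ`. Exchangeability
is the case `G = Π(n+1)`, acting on `𝒵^{n+1}` by `z ↦ z ∘ π`.
-/

open MeasureTheory
open scoped ENNReal NNReal

instance DomMulAct.instFintype {M : Type*} [Fintype M] : Fintype Mᵈᵐᵃ :=
  Fintype.ofEquiv M DomMulAct.mk

noncomputable section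

namespace MeasureTheory

variable (G : Type*) {α : Type*} [Group G] [Fintype G] [MulAction G α]

def orbitSum (f : α → ℝ≥0) (x : α) : ℝ≥0∞ := ∑ g : G, (f (g • x) : ℝ≥0∞)

def orbitEValue (f : α → ℝ≥0) (x : α) : ℝ≥0∞ :=
  if (Fintype.card G : ℝ≥0∞)⁻¹ * orbitSum G f x = 0 then 1
  else f x / ((Fintype.card G : ℝ≥0∞)⁻¹ * orbitSum G f x)

variable {G} (f : α → ℝ≥0)

theorem orbitSum_smul (g : G) (x : α) : orbitSum G f (g • x) = orbitSum G f x := by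
  simp only [orbitSum, smul_smul]
  exact Equiv.sum_comp (Equiv.mulRight g) fun h => (f (h • x) : ℝ≥0∞)

theorem coe_le_orbitSum (x : α) : (f x : ℝ≥0∞) ≤ orbitSum G f x := by
  unfold orbitSum
  simpa using Finset.single_le_sum (f := fun g : G => (f (g • x) : ℝ≥0∞))
    (fun _ _ => zero_le) (Finset.mem_univ 1)

theorem orbitSum_ne_top (x : α) : orbitSum G f x ≠ ∞ :=
  ENNReal.sum_ne_top.mpr fun _ _ => ENNReal.coe_ne_top

theorem orbitEValue_eq (x : α) :
    orbitEValue G f x = {x | orbitSum G f x = 0}.indicator 1 x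
      + Fintype.card G * (f x / orbitSum G f x) := by
  have hcard : (Fintype.card G : ℝ≥0∞) ≠ 0 := by simp
  by_cases h : orbitSum G f x = 0
  · have hfx : (f x : ℝ≥0∞) = 0 := le_antisymm (h ▸ coe_le_orbitSum f x) zero_le
    simp [orbitEValue, h, hfx]
  · have hne : (Fintype.card G : ℝ≥0∞)⁻¹ * orbitSum G f x ≠ 0 :=
      mul_ne_zero (ENNReal.inv_ne_zero.mpr (ENNReal.natCast_ne_top _)) h
    rw [orbitEValue, if_neg hne,
      Set.indicator_of_notMem (show x ∉ {x | orbitSum G f x = 0} from h), zero_add,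
      div_eq_mul_inv,
      ENNReal.mul_inv (.inl (ENNReal.inv_ne_zero.mpr (ENNReal.natCast_ne_top _)))
        (.inl (ENNReal.inv_ne_top.mpr hcard)), inv_inv, div_eq_mul_inv]
    ring

variable [MeasurableSpace α]

theorem measurable_orbitSum {f : α → ℝ≥0} (hf : Measurable f)
    (hact : ∀ g : G, Measurable fun x : α => g • x) : Measurable (orbitSum G f) :=
  Finset.measurable_sum _ fun g _ => hf.coe_nnreal_ennreal.comp (hact g)

theorem card_mul_lintegral_div_orbitSum {μ : Measure α} {f : α → ℝ≥0} (hf : Measurable f)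
    (hμ : ∀ g : G, MeasurePreserving (fun x : α => g • x) μ μ) :
    Fintype.card G * ∫⁻ x, f x / orbitSum G f x ∂μ = μ {x | orbitSum G f x = 0}ᶜ := by
  have hS := measurable_orbitSum hf fun g => (hμ g).measurable
  have hzero : MeasurableSet {x | orbitSum G f x = 0} := hS (measurableSet_singleton 0)
  have htranslate (g : G) :
      ∫⁻ x, f (g • x) / orbitSum G f x ∂μ = ∫⁻ x, f x / orbitSum G f x ∂μ := by
    calc ∫⁻ x, f (g • x) / orbitSum G f x ∂μ
        = ∫⁻ x, f (g • x) / orbitSum G f (g • x) ∂μ := by simp_rw [orbitSum_smul]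
      _ = ∫⁻ x, f x / orbitSum G f x ∂μ :=
        (hμ g).lintegral_comp (hf.coe_nnreal_ennreal.div hS)
  have hsum_div (x : α) : ∑ g : G, (f (g • x) : ℝ≥0∞) / orbitSum G f x
      = {x | orbitSum G f x = 0}ᶜ.indicator 1 x := by
    simp_rw [div_eq_mul_inv, ← Finset.sum_mul]
    change orbitSum G f x * (orbitSum G f x)⁻¹ = _
    by_cases h : orbitSum G f x = 0
    · simp [h]
    · rw [Set.indicator_of_mem (show x ∈ {x | orbitSum G f x = 0}ᶜ from h)]
      exact ENNReal.mul_inv_cancel h (orbitSum_ne_top f x)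
  calc Fintype.card G * ∫⁻ x, f x / orbitSum G f x ∂μ
      = ∑ g : G, ∫⁻ x, f (g • x) / orbitSum G f x ∂μ := by
        simp [htranslate, Finset.sum_const, nsmul_eq_mul]
    _ = ∫⁻ x, ∑ g : G, (f (g • x) : ℝ≥0∞) / orbitSum G f x ∂μ :=
        (lintegral_finsetSum _ fun g _ =>
          (hf.coe_nnreal_ennreal.comp (hμ g).measurable).div hS).symm
    _ = μ {x | orbitSum G f x = 0}ᶜ := by
        simp_rw [hsum_div]
        exact lintegral_indicator_one hzero.compl

theorem lintegral_orbitEValue {μ : Measure α} {f : α → ℝ≥0} (hf : Measurable f)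
    (hμ : ∀ g : G, MeasurePreserving (fun x : α => g • x) μ μ) :
    ∫⁻ x, orbitEValue G f x ∂μ = μ Set.univ := by
  have hS := measurable_orbitSum hf fun g => (hμ g).measurable
  have hzero : MeasurableSet {x | orbitSum G f x = 0} := hS (measurableSet_singleton 0)
  simp_rw [orbitEValue_eq]
  rw [lintegral_add_left (measurable_one.indicator hzero), lintegral_indicator_one hzero,
    lintegral_const_mul' _ _ (ENNReal.natCast_ne_top _),
    card_mul_lintegral_div_orbitSum hf hμ, measure_add_measure_compl hzero]

end MeasureTheory

end

/-- The permutation-averaged statistic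
`ε(z) = T(z) / ((1/(n+1)!) ∑_π T(πz))` (set to `1` when the denominator is `0`)
is a valid e-value for the exchangeable model: its expectation is at most `1`
under every exchangeable probability measure `P` under which `T` is not a.s.
zero. -/
theorem stmt_13 {Z : Type*} [MeasurableSpace Z] (n : ℕ)
    (T : (Fin (n + 1) → Z) → ℝ≥0) (hT : Measurable T) :
    ∀ P : Measure (Fin (n + 1) → Z), IsProbabilityMeasure P →
      (∀ π : Equiv.Perm (Fin (n + 1)), Measure.map (fun z => z ∘ π) P = P) →
      ¬ (T =ᵐ[P] 0) →
      ∫⁻ z,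
        (if ((↑(Nat.factorial (n + 1)) : ℝ≥0∞)⁻¹ *
              ∑ π : Equiv.Perm (Fin (n + 1)), (T (z ∘ π) : ℝ≥0∞)) = 0 then 1
          else (T z : ℝ≥0∞) /
            ((↑(Nat.factorial (n + 1)) : ℝ≥0∞)⁻¹ *
              ∑ π : Equiv.Perm (Fin (n + 1)), (T (z ∘ π) : ℝ≥0∞))) ∂P ≤ 1 := by
  intro P _ hexch _
  -- `z ∘ π` is the action of `DomMulAct.mk π`.
  have hsum (z : Fin (n + 1) → Z) :
      ∑ π : Equiv.Perm (Fin (n + 1)), (T (z ∘ π) : ℝ≥0∞)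
        = orbitSum (Equiv.Perm (Fin (n + 1)))ᵈᵐᵃ T z :=
    Equiv.sum_comp DomMulAct.mk fun g => (T (g • z) : ℝ≥0∞)
  have hcard : (n + 1).factorial = Fintype.card (Equiv.Perm (Fin (n + 1)))ᵈᵐᵃ := by
    rw [Fintype.card_congr DomMulAct.mk.symm, Fintype.card_perm, Fintype.card_fin]
  have hinv (g : (Equiv.Perm (Fin (n + 1)))ᵈᵐᵃ) :
      MeasurePreserving (fun z : Fin (n + 1) → Z => g • z) P P :=
    ⟨measurable_pi_lambda _ fun i => measurable_pi_apply _, hexch (DomMulAct.mk.symm g)⟩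
  refine le_of_eq ?_
  calc _ = ∫⁻ z, orbitEValue (Equiv.Perm (Fin (n + 1)))ᵈᵐᵃ T z ∂P := by
        simp only [hsum, hcard, orbitEValue]
    _ = 1 := by rw [lintegral_orbitEValue hT hinv, measure_univ]
end

section
/- Let ℰ^{Z^n} : 𝒵 → (0,∞] be a valid fuzzy confidence set (E_P[ℰ^{Z^n}(Z_{n+1})] ≤ 1 for all P ∈ 𝒫), L : 𝒟 × 𝒵 → [0,∞) a loss, and δ ∈ 𝒟 any decision. Define R = sup_{z ∈ 𝒵} L(δ, z)/ℰ^{Z^n}(z), assumed finite and positive. Then E_P[L(δ(ℰ^{Z^n}), Z_{n+1}) / R(ℰ^{Z^n})] ≤ 1 for every P ∈ 𝒫, where δ(ℰ^{Z^n}) minimizes the weighted worst-case loss and R(ℰ^{Z^n}) is its value. -/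
open MeasureTheory
open scoped ENNReal

/-- Evidence-weighted certified decisions: let `ℰ` be a valid fuzzy confidence
set with strictly positive values, `L` a nonnegative loss, and `δ` a decision
rule with weighted worst-case risk `R(z^n) = sup_z L(δ(z^n), z)/ℰ^{z^n}(z)`,
assumed finite and positive. Then the expected ratio of the realized loss to the
risk bound is at most `1` under every `P` in the model. -/
theorem stmt_15 {Z D : Type*} [MeasurableSpace Z] (n : ℕ)
    (model : Set (Measure ((Fin n → Z) × Z)))
    (hP : ∀ P ∈ model, IsProbabilityMeasure P)
    (E : (Fin n → Z) × Z → ℝ≥0∞) (hE : Measurable E)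
    (hEpos : ∀ ω, 0 < E ω)
    (hvalid : ∀ P ∈ model, ∫⁻ ω, E ω ∂P ≤ 1)
    (L : D → Z → ℝ≥0∞) (δ : (Fin n → Z) → D)
    (R : (Fin n → Z) → ℝ≥0∞)
    (hR : ∀ zn, R zn = ⨆ z : Z, L (δ zn) z / E (zn, z))
    (hRpos : ∀ zn, 0 < R zn) (hRfin : ∀ zn, R zn ≠ ∞) :
    ∀ P ∈ model, ∫⁻ ω, L (δ ω.1) ω.2 / R ω.1 ∂P ≤ 1 := by
  intro P hPm
  refine le_trans (lintegral_mono fun ω => ?_) (hvalid P hPm)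
  obtain ⟨zn, z⟩ := ω
  have hle : L (δ zn) z / E (zn, z) ≤ R zn := by
    rw [hR zn]; exact le_iSup (fun z => L (δ zn) z / E (zn, z)) z
  rw [ENNReal.div_le_iff (hRpos zn).ne' (hRfin zn)]
  by_cases hEtop : E (zn, z) = ∞
  · rw [hEtop, ENNReal.top_mul (hRpos zn).ne']; exact le_top
  · have := (ENNReal.div_le_iff (hEpos (zn, z)).ne' hEtop).mp hle
    rwa [mul_comm] at this
end
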